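/- arXiv:1310.7113 — 2 statements merged into one kernel-verified Lean document; each statement's English description precedes it below -/
import Mathlib

section
/- Let f : ℝ → ℝ satisfy (f(a) - f(b))(a - b) ≤ -γ(a-b)² and |f(a)| ≤ c_f(|a|^{2p+1} + 1) for all a, b ∈ ℝ, where γ, c_f > 0 and p is a positive integer. Then there is a constant c₁ > 0 depending only on γ, c_f, p such that for all x, w ∈ ℝ: 2 f(x + w) x ≤ c₁(|w|^{4p+2} + |w|² + 1). -/
/-- If f satisfies the one-sided dissipative Lipschitz condition and
polynomial growth |f(a)| ≤ c_f(|a|^{2p+1}+1), then there is c₁ > 0 depending only on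
γ, c_f, p with 2 f(x+w) x ≤ c₁(|w|^{4p+2} + |w|² + 1) for all x, w ∈ ℝ. -/
theorem dissipative_growth_estimate
    (γ cf : ℝ) (hγ : 0 < γ) (hcf : 0 < cf) (p : ℕ) (hp : 1 ≤ p) (f : ℝ → ℝ)
    (hdiss : ∀ a b : ℝ, (f a - f b) * (a - b) ≤ -γ * (a - b) ^ 2)
    (hgrowth : ∀ a : ℝ, |f a| ≤ cf * (|a| ^ (2 * p + 1) + 1)) :
    ∃ c₁ : ℝ, 0 < c₁ ∧
      ∀ x w : ℝ, 2 * f (x + w) * x ≤ c₁ * (|w| ^ (4 * p + 2) + |w| ^ 2 + 1) := by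
  refine ⟨cf ^ 2 / γ, by positivity, fun x w => ?_⟩
  have h1 := hdiss (x + w) w
  have h2 := hgrowth w
  set t : ℝ := |w| ^ (2 * p + 1) with ht
  have ht0 : 0 ≤ t := by positivity
  have hsq : |w| ^ (4 * p + 2) = t ^ 2 := by
    rw [ht, ← pow_mul]; congr 1; ring
  have hx : (x + w) - w = x := by ring
  rw [hx] at h1
  have hBx : f w * x ≤ |f w| * |x| := by
    calc f w * x ≤ |f w * x| := le_abs_self _
    _ = |f w| * |x| := abs_mul _ _
  have hB0 : 0 ≤ |f w| := abs_nonneg _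
  have habs : |x| * |x| = x * x := abs_mul_abs_self x
  have hw2 : (0:ℝ) ≤ |w| ^ 2 := by positivity
  rw [hsq]
  rw [div_mul_eq_mul_div, le_div_iff₀ hγ]
  have hBB : |f w| * |f w| ≤ (cf * (t + 1)) * (cf * (t + 1)) :=
    mul_le_mul h2 h2 hB0 (by positivity)
  have hgx : γ ^ 2 * |x| ^ 2 = γ ^ 2 * x ^ 2 := by rw [sq_abs]
  nlinarith [sq_nonneg (|f w| - 2 * γ * |x|), sq_nonneg (t - 1),
    mul_le_mul_of_nonneg_left h1 hγ.le, mul_le_mul_of_nonneg_left hBx hγ.le,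
    hgx, hBB, hw2, sq_nonneg x]
end

section
/- Let λ, σ, ϱ > 0 and let α = min{λ, σ}. Suppose Ψ, Φ : [0, ∞) → E = ℓ² × ℓ² are differentiable and both satisfy the differential equation d/dt (u, v) = (-Au - λu + F(u) - v, ϱu - σv), where A is the discrete Laplacian (Au)_i = -u_{i-1} + 2u_i - u_{i+1} and F is a Nemytskii operator satisfying (F(u) - F(v), u - v) ≤ -γ‖u - v‖² with γ > 0. With the inner product on E given by ((u₁,v₁),(u₂,v₂))_E = (u₁,u₂) + (1/ϱ)(v₁,v₂), one has d/dt ‖Ψ(t) - Φ(t)‖²_E ≤ -2α ‖Ψ(t) - Φ(t)‖²_E for all t ≥ 0. -/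
open scoped RealInnerProductSpace

/-! With `w = u - u'` and `z = v - v'`, the derivative of `‖w‖² + ‖z‖² / ϱ` is
`2⟪w, w'⟫ + (2 / ϱ)⟪z, z'⟫`. The coupling terms `-2⟪w, z⟫` and `(2 / ϱ)⟪z, ϱ w⟫` cancel because
of the weight `1 / ϱ`; summation by parts turns the Laplacian term into
`-2 ∑ (w i - w (i + 1))² ≤ 0`; the dissipative nonlinearity contributes `-2γ‖w‖² ≤ 0`. What is
left, `-2λ‖w‖² - (2σ / ϱ)‖z‖²`, is at most `-2 min λ σ` times the energy. -/

theorem summable_sq_of_mem_l2 {ι : Type*} (w : lp (fun _ : ι => ℝ) 2) :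
    Summable fun i => w i ^ 2 := by
  simpa using lp.summable_inner (𝕜 := ℝ) w w

theorem summable_mul_shift_of_mem_l2 {ι : Type*} [AddGroup ι] (w : lp (fun _ : ι => ℝ) 2)
    (k : ι) :
    Summable fun i => w i * w (i + k) := by
  have hs := summable_sq_of_mem_l2 w
  have hk : Summable fun i => w (i + k) ^ 2 := hs.comp_injective (add_left_injective k)
  refine .of_norm_bounded (hs.add hk) fun i => ?_
  rw [Real.norm_eq_abs, abs_mul, ← sq_abs (w i), ← sq_abs (w (i + k))]
  nlinarith [two_mul_le_add_sq |w i| |w (i + k)|, abs_nonneg (w i), abs_nonneg (w (i + k))]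

theorem tsum_discreteLaplacian_mul_self (w : lp (fun _ : ℤ => ℝ) 2) :
    ∑' i, (-w (i - 1) + 2 * w i - w (i + 1)) * w i = ∑' i, (w i - w (i + 1)) ^ 2 := by
  obtain ⟨S, hS⟩ := summable_sq_of_mem_l2 w
  obtain ⟨C, hC⟩ := summable_mul_shift_of_mem_l2 w 1
  have hS₁ : HasSum (fun i => w (i + 1) ^ 2) S := (Equiv.addRight (1 : ℤ)).hasSum_iff.2 hS
  have hC₁ : HasSum (fun i => w (i - 1) * w i) C := by
    simpa [Function.comp_def] using (Equiv.subRight (1 : ℤ)).hasSum_iff.2 hC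
  have hL : HasSum (fun i => (-w (i - 1) + 2 * w i - w (i + 1)) * w i) (2 * S - C - C) :=
    ((hS.mul_left 2).sub hC₁).sub hC |>.congr_fun fun i => by ring
  have hR : HasSum (fun i => (w i - w (i + 1)) ^ 2) (S - 2 * C + S) :=
    (hS.sub (hC.mul_left 2)).add hS₁ |>.congr_fun fun i => by ring
  rw [hL.tsum_eq, hR.tsum_eq]
  ring

section DiscreteLaplacian

variable {A : lp (fun _ : ℤ => ℝ) 2 → lp (fun _ : ℤ => ℝ) 2}
  (hA : ∀ w i, A w i = -w (i - 1) + 2 * w i - w (i + 1))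
include hA

theorem discreteLaplacian_map_sub (x y : lp (fun _ : ℤ => ℝ) 2) : A x - A y = A (x - y) := by
  ext i
  simp only [lp.coeFn_sub, Pi.sub_apply, hA]
  ring

theorem discreteLaplacian_inner_self_nonneg (w : lp (fun _ : ℤ => ℝ) 2) : 0 ≤ ⟪A w, w⟫ := by
  simp only [lp.inner_eq_tsum, hA, RCLike.inner_apply, conj_trivial, mul_comm (w _)]
  rw [tsum_discreteLaplacian_mul_self]
  exact tsum_nonneg fun i => sq_nonneg _

end DiscreteLaplacian

theorem fitzHughNagumo_energy_rate_le {H : Type*} [NormedAddCommGroup H] [InnerProductSpace ℝ H]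
    {lam sig rho : ℝ} (hrho : 0 < rho) {w z a f : H} (ha : 0 ≤ ⟪a, w⟫) (hf : ⟪f, w⟫ ≤ 0) :
    2 * ⟪w, -a - lam • w + f - z⟫ + 1 / rho * (2 * ⟪z, rho • w - sig • z⟫) ≤
      -2 * min lam sig * (‖w‖ ^ 2 + 1 / rho * ‖z‖ ^ 2) := by
  have hcancel : 1 / rho * (rho * ⟪z, w⟫) = ⟪w, z⟫ := by
    rw [real_inner_comm]
    field_simp
  have hz : 0 ≤ 1 / rho * ‖z‖ ^ 2 := by positivity
  simp only [sub_eq_add_neg, inner_add_right, inner_neg_right, real_inner_smul_right,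
    real_inner_comm a w, real_inner_comm f w, real_inner_self_eq_norm_sq]
  nlinarith [mul_le_mul_of_nonneg_right (min_le_left lam sig) (sq_nonneg ‖w‖),
    mul_le_mul_of_nonneg_right (min_le_right lam sig) hz]

theorem fhn_difference_derivative_decay_general
    (lam sig rho γ : ℝ) (hrho : 0 < rho) (hγ : 0 < γ)
    (A F : lp (fun _ : ℤ => ℝ) 2 → lp (fun _ : ℤ => ℝ) 2)
    (hA : ∀ w i, A w i = -w (i - 1) + 2 * w i - w (i + 1))
    (hF : ∀ w w' : lp (fun _ : ℤ => ℝ) 2, ⟪F w - F w', w - w'⟫ ≤ -γ * ‖w - w'‖ ^ 2)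
    (u v u' v' : ℝ → lp (fun _ : ℤ => ℝ) 2)
    (hu : ∀ t ≥ (0 : ℝ), HasDerivAt u (-A (u t) - lam • u t + F (u t) - v t) t)
    (hv : ∀ t ≥ (0 : ℝ), HasDerivAt v (rho • u t - sig • v t) t)
    (hu' : ∀ t ≥ (0 : ℝ), HasDerivAt u' (-A (u' t) - lam • u' t + F (u' t) - v' t) t)
    (hv' : ∀ t ≥ (0 : ℝ), HasDerivAt v' (rho • u' t - sig • v' t) t) :
    ∀ t ≥ (0 : ℝ), ∀ d : ℝ,
      HasDerivAt (fun s => ‖u s - u' s‖ ^ 2 + (1 / rho) * ‖v s - v' s‖ ^ 2) d t →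
      d ≤ -2 * min lam sig *
        (‖u t - u' t‖ ^ 2 + (1 / rho) * ‖v t - v' t‖ ^ 2) := by
  intro t ht d hd
  have hE := ((hu t ht).sub (hu' t ht)).norm_sq.add
    (((hv t ht).sub (hv' t ht)).norm_sq.const_mul (1 / rho))
  have hDu : (-A (u t) - lam • u t + F (u t) - v t) - (-A (u' t) - lam • u' t + F (u' t) - v' t) =
      -A (u t - u' t) - lam • (u t - u' t) + (F (u t) - F (u' t)) - (v t - v' t) := by
    rw [← discreteLaplacian_map_sub hA]
    module
  have hDv : (rho • u t - sig • v t) - (rho • u' t - sig • v' t) =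
      rho • (u t - u' t) - sig • (v t - v' t) := by
    module
  rw [hd.unique hE, hDu, hDv]
  exact fitzHughNagumo_energy_rate_le hrho (discreteLaplacian_inner_self_nonneg hA _)
    ((hF _ _).trans (mul_nonpos_of_nonpos_of_nonneg (neg_nonpos.2 hγ.le) (sq_nonneg _)))

/-- For the FitzHugh-Nagumo lattice system with λ, σ, ϱ > 0,
α = min{λ, σ}, discrete Laplacian A and one-sided dissipative Nemytskii operator F,
the squared E-norm ‖Ψ(t) - Φ(t)‖²_E = ‖u - ũ‖² + (1/ϱ)‖v - ṽ‖² of the difference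
of two solutions satisfies d/dt ‖Ψ(t) - Φ(t)‖²_E ≤ -2α ‖Ψ(t) - Φ(t)‖²_E for t ≥ 0. -/
theorem fhn_difference_derivative_decay
    (lam sig rho γ : ℝ) (hlam : 0 < lam) (hsig : 0 < sig) (hrho : 0 < rho) (hγ : 0 < γ)
    (A F : lp (fun _ : ℤ => ℝ) 2 → lp (fun _ : ℤ => ℝ) 2)
    (hA : ∀ w i, A w i = -w (i - 1) + 2 * w i - w (i + 1))
    (hF : ∀ w w' : lp (fun _ : ℤ => ℝ) 2, ⟪F w - F w', w - w'⟫ ≤ -γ * ‖w - w'‖ ^ 2)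
    (u v u' v' : ℝ → lp (fun _ : ℤ => ℝ) 2)
    (hu : ∀ t ≥ (0 : ℝ), HasDerivAt u (-A (u t) - lam • u t + F (u t) - v t) t)
    (hv : ∀ t ≥ (0 : ℝ), HasDerivAt v (rho • u t - sig • v t) t)
    (hu' : ∀ t ≥ (0 : ℝ), HasDerivAt u' (-A (u' t) - lam • u' t + F (u' t) - v' t) t)
    (hv' : ∀ t ≥ (0 : ℝ), HasDerivAt v' (rho • u' t - sig • v' t) t) :
    ∀ t ≥ (0 : ℝ), ∀ d : ℝ,
      HasDerivAt (fun s => ‖u s - u' s‖ ^ 2 + (1 / rho) * ‖v s - v' s‖ ^ 2) d t →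
      d ≤ -2 * min lam sig *
        (‖u t - u' t‖ ^ 2 + (1 / rho) * ‖v t - v' t‖ ^ 2) :=
  fhn_difference_derivative_decay_general lam sig rho γ hrho hγ A F hA hF u v u' v' hu hv hu' hv'
end
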